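/- If A ⊆ B ⊆ P(ω₁), A is the finite-cofinite algebra, and B contains all initial segments of ω₁, then π(B) = Irr_mm(B) = ℵ₁. -/

import Mathlib

open Cardinal Set

universe u
variable {B : Type u} [BooleanAlgebra B]

/-- Membership in the boolean subalgebra of `B` generated by `E`. -/
inductive InGen (E : Set B) : B → Prop
  | base {a : B} : a ∈ E → InGen E a
  | bot : InGen E ⊥
  | compl {a : B} : InGen E a → InGen E aᶜ
  | sup {a b : B} : InGen E a → InGen E b → InGen E (a ⊔ b)

/-- `E` is irredundant. -/
def Irred (E : Set B) : Prop := ∀ a ∈ E, ¬ InGen (E \ {a}) a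

/-- `E` is independent. -/
def Indep (E : Set B) : Prop :=
  ∀ F G : Finset B, ↑F ⊆ E → ↑G ⊆ E → Disjoint F G →
    F.inf id ⊓ G.inf (fun a => aᶜ) ≠ ⊥

/-- `S` is dense in `B`. -/
def DenseSub (S : Set B) : Prop := ∀ b : B, b ≠ ⊥ → ∃ d ∈ S, d ≠ ⊥ ∧ d ≤ b

/-- pi-weight of `B`: least size of a dense subset. -/
noncomputable def piWeight (B : Type u) [BooleanAlgebra B] : Cardinal :=
  sInf {c | ∃ S : Set B, DenseSub S ∧ #S = c}

/-- `E` is a maximal irredundant subset of `B`. -/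
def MaxIrred (E : Set B) : Prop :=
  Irred E ∧ ∀ b : B, b ∉ E → ¬ Irred (insert b E)

/-- least size of a maximal irredundant subset of `B`. -/
noncomputable def irrMM (B : Type u) [BooleanAlgebra B] : Cardinal :=
  sInf {c | ∃ E : Set B, MaxIrred E ∧ #E = c}


/-- A fixed set of size ℵ₁ with its canonical well-order: "ω₁". -/
noncomputable def W : Type := (Cardinal.aleph 1).ord.ToType

noncomputable instance : LinearOrder W := inferInstanceAs (LinearOrder (Cardinal.aleph 1).ord.ToType)

/-- The finite-cofinite algebra on ω₁. -/
def finCofin : Set (Set W) := {b | b.Finite ∨ bᶜ.Finite}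

/-- `S` is (the underlying set of) a subalgebra of `P(ω₁)`. -/
def IsSubalg (S : Set (Set W)) : Prop :=
  ∅ ∈ S ∧ (∀ a ∈ S, aᶜ ∈ S) ∧ ∀ a ∈ S, ∀ b ∈ S, a ∪ b ∈ S

/-- `E` is a maximal irredundant subset of the subalgebra (with carrier) `Bs`. -/
def MaxIrredIn (Bs E : Set (Set W)) : Prop :=
  E ⊆ Bs ∧ Irred E ∧ ∀ b ∈ Bs, b ∉ E → ¬ Irred (insert b E)

/-- `Irr_mm` of a subalgebra of `P(ω₁)` with carrier `Bs`. -/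
noncomputable def irrMMIn (Bs : Set (Set W)) : Cardinal :=
  sInf {c | ∃ E, MaxIrredIn Bs E ∧ #E = c}

/-- pi-weight of a subalgebra of `P(ω₁)` with carrier `Bs`. -/
noncomputable def piIn (Bs : Set (Set W)) : Cardinal :=
  sInf {c | ∃ S, S ⊆ Bs ∧ (∀ b ∈ Bs, b ≠ ∅ → ∃ d ∈ S, d ≠ ∅ ∧ d ⊆ b) ∧ #S = c}

/-- `C` is a closed unbounded subset of ω₁. -/
def IsClubW (C : Set W) : Prop :=
  (∀ α : W, ∃ β ∈ C, α < β) ∧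
    ∀ α : W, (C ∩ Set.Iio α).Nonempty → IsLUB (C ∩ Set.Iio α) α → α ∈ C

/-- `α` and `β` lie in the same `C`-block. -/
def SameBlock (C : Set W) (α β : W) : Prop := ∀ γ ∈ C, (γ ≤ α ↔ γ ≤ β)

/-- `C` is a nice club: all of its blocks are infinite. -/
def NiceClub (C : Set W) : Prop := IsClubW C ∧ ∀ α : W, {β | SameBlock C α β}.Infinite

/-- `b` is a union of `C`-blocks. -/
def BlockUnion (C : Set W) (b : Set W) : Prop :=
  ∀ α β : W, SameBlock C α β → (α ∈ b ↔ β ∈ b)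

/-- `b` is blockish for `C`: both `b` and its complement are unions of ℵ₁ many `C`-blocks. -/
def Blockish (C : Set W) (b : Set W) : Prop :=
  BlockUnion C b ∧ ¬ b.Countable ∧ ¬ bᶜ.Countable

/-- eventual domination: `f α ≤ g α` except on a set of size `< ℵ₁`. -/
def EvDom (f g : W → W) : Prop := {α | ¬ f α ≤ g α}.Countable

/-- the bounding number 𝔟_{ω₁}. -/
noncomputable def bW : Cardinal :=
  sInf {c | ∃ F : Set (W → W), (∀ g, ∃ f ∈ F, ¬ EvDom f g) ∧ #F = c}

/-- the dominating number 𝔡_{ω₁}. -/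
noncomputable def dW : Cardinal :=
  sInf {c | ∃ F : Set (W → W), (∀ g, ∃ f ∈ F, EvDom g f) ∧ #F = c}

/-- `T` splits `X`. -/
def Splits (T X : Set W) : Prop := ¬ (X ∩ T).Countable ∧ ¬ (X \ T).Countable

/-- the reaping number 𝔯_{ω₁}. -/
noncomputable def rW : Cardinal :=
  sInf {c | ∃ R : Set (Set W), (∀ X ∈ R, ¬ X.Countable) ∧
    (∀ T : Set W, ∃ X ∈ R, ¬ Splits T X) ∧ #R = c}

/-- the nice club `C` strongly splits `R`. -/
def StrSplits (C : Set W) (R : Set (Set W)) : Prop :=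
  ∀ b : Set W, Blockish C b → ∀ X ∈ R, Splits b X

/-- the strong reaping number r̂_{ω₁}. -/
noncomputable def rHatW : Cardinal :=
  sInf {c | ∃ R : Set (Set W), (∀ X ∈ R, ¬ X.Countable) ∧
    (∀ C : Set W, NiceClub C → ¬ StrSplits C R) ∧ #R = c}

/-- a subalgebra of `P(ω₁)` is dichotomous iff none of its members is countably infinite. -/
def Dichot (Bs : Set (Set W)) : Prop := ∀ b ∈ Bs, ¬ (b.Countable ∧ b.Infinite)

/-!
Singletons are atoms of `B`, so every dense subset of `B` contains all of them, while the
singletons themselves are dense: `π(B) = ℵ₁`.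

The nonempty initial segments form a maximal irredundant set of size `ℵ₁`. A generator `Iio γ`
with `γ ≠ α` is constant on some final piece `[β, α)` of `Iio α`, hence so is everything they
generate, but `Iio α` is not. Any other nonempty, non-full `b`, together with
`Iic m = Iio (succ m)`, generates `Iio m = b ∩ Iic m` (or `bᶜ ∩ Iic m`), where `m` is the least
point at which membership in `b` changes. Conversely a countable irredundant `E` generates only
countably many sets, so some `x` has neither `{x}` nor any `a ∆ {x}` (`a ∈ E`) generated by `E`;
since `{x}` is an atom, `insert {x} E` is then still irredundant.
-/

open scoped symmDiff

def genStage (E : Set B) : ℕ → Set B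
  | 0 => insert ⊥ E
  | n + 1 => genStage E n ∪ compl '' genStage E n ∪ image2 (· ⊔ ·) (genStage E n) (genStage E n)

lemma genStage_mono (E : Set B) : Monotone (genStage E) :=
  monotone_nat_of_le_succ fun _ => subset_union_left.trans subset_union_left

namespace InGen

variable {E F : Set B} {a b : B}

lemma mono (h : E ⊆ F) (ha : InGen E a) : InGen F a := by
  induction ha with
  | base h' => exact .base (h h')
  | bot => exact .bot
  | compl _ ih => exact .compl ih
  | sup _ _ ih₁ ih₂ => exact .sup ih₁ ih₂

lemma top (E : Set B) : InGen E ⊤ := by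
  simpa using (InGen.bot (E := E)).compl

lemma inf (ha : InGen E a) (hb : InGen E b) : InGen E (a ⊓ b) := by
  simpa using (ha.compl.sup hb.compl).compl

lemma exists_sdiff_eq_of_insert (h : InGen (insert b E) a) : ∃ g, InGen E g ∧ a \ b = g \ b := by
  induction h with
  | @base c hc =>
    rcases hc with rfl | hc
    · exact ⟨⊥, .bot, by simp⟩
    · exact ⟨c, .base hc, rfl⟩
  | bot => exact ⟨⊥, .bot, rfl⟩
  | @compl c _ ih =>
    obtain ⟨g, hg, hcg⟩ := ih
    refine ⟨gᶜ, hg.compl, ?_⟩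
    rw [_root_.sdiff_eq, _root_.sdiff_eq, ← compl_sup, ← compl_sup, ← sup_sdiff_self_left b c,
      hcg, sup_sdiff_self_left]
  | @sup c d _ _ ih₁ ih₂ =>
    obtain ⟨g₁, hg₁, hcg₁⟩ := ih₁
    obtain ⟨g₂, hg₂, hdg₂⟩ := ih₂
    exact ⟨g₁ ⊔ g₂, hg₁.sup hg₂, by rw [sup_sdiff, sup_sdiff, hcg₁, hdg₂]⟩

lemma of_insert_atom (hb : IsAtom b) (h : InGen (insert b E) a) :
    InGen E a ∨ InGen E (a ∆ b) := by
  obtain ⟨g, hg, hag⟩ := exists_sdiff_eq_of_insert h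
  have hle : a ∆ g ≤ b :=
    symmDiff_le (sdiff_le_iff'.1 (hag.trans_le sdiff_le))
      (sdiff_le_iff'.1 (hag.symm.trans_le sdiff_le))
  rcases hb.le_iff.1 hle with hbot | heq
  · exact .inl (symmDiff_eq_bot.1 hbot ▸ hg)
  · exact .inr (by rwa [← heq, symmDiff_symmDiff_cancel_left])

lemma exists_mem_genStage (h : InGen E a) : ∃ n, a ∈ genStage E n := by
  induction h with
  | base h' => exact ⟨0, mem_insert_of_mem _ h'⟩
  | bot => exact ⟨0, mem_insert _ _⟩
  | @compl c _ ih =>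
    obtain ⟨n, hn⟩ := ih
    exact ⟨n + 1, Or.inl (Or.inr ⟨c, hn, rfl⟩)⟩
  | @sup c d _ _ ih₁ ih₂ =>
    obtain ⟨m, hm⟩ := ih₁
    obtain ⟨n, hn⟩ := ih₂
    exact ⟨max m n + 1, Or.inr (mem_image2_of_mem (genStage_mono E (le_max_left m n) hm)
      (genStage_mono E (le_max_right m n) hn))⟩

lemma countable_setOf (hE : E.Countable) : {a | InGen E a}.Countable := by
  have hstage : ∀ n, (genStage E n).Countable := by
    intro n
    induction n with
    | zero => exact hE.insert ⊥
    | succ n ih => exact (ih.union (ih.image _)).union (ih.image2 ih _)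
  exact (countable_iUnion hstage).mono fun a ha => mem_iUnion.2 (exists_mem_genStage ha)

end InGen

lemma Irred.insert_atom {E : Set B} {b : B} (hE : Irred E) (hb : IsAtom b)
    (hbE : ¬ InGen E b) (hsymm : ∀ a ∈ E, ¬ InGen E (a ∆ b)) : Irred (insert b E) := by
  intro c hc hgen
  by_cases hcb : c = b
  · subst hcb
    refine hbE (hgen.mono ?_)
    rintro z ⟨hz, hzc⟩
    exact (mem_insert_iff.1 hz).resolve_left hzc
  have hcE : c ∈ E := (mem_insert_iff.1 hc).resolve_left hcb
  have hgen' : InGen (insert b (E \ {c})) c := hgen.mono <| by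
    rintro z ⟨hz, hzc⟩
    rcases mem_insert_iff.1 hz with rfl | hz
    exacts [mem_insert _ _, mem_insert_of_mem _ ⟨hz, hzc⟩]
  rcases hgen'.of_insert_atom hb with h | h
  · exact hE c hcE h
  · exact hsymm c hcE (h.mono sdiff_subset)

lemma Irred.exists_insert_singleton {α : Type*} [Uncountable α] {E : Set (Set α)}
    (hEc : E.Countable) (hE : Irred E) : ∃ x, {x} ∉ E ∧ Irred (insert {x} E) := by
  have hS := InGen.countable_setOf hEc
  set bad : Set α := singleton ⁻¹' {a | InGen E a} ∪
    ⋃ a ∈ E, (fun x => a ∆ {x}) ⁻¹' {a | InGen E a}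
  have hbad : bad.Countable :=
    (hS.preimage singleton_injective).union <| hEc.biUnion fun a _ =>
      hS.preimage ((symmDiff_right_injective a).comp singleton_injective)
  obtain ⟨x, hx⟩ : ∃ x, x ∉ bad := by
    by_contra! h
    exact not_countable (countable_univ_iff.1 (hbad.mono fun x _ => h x))
  have hxE : ¬ InGen E {x} := fun h => hx (.inl h)
  refine ⟨x, fun h => hxE (.base h), hE.insert_atom (isAtom_singleton x) hxE fun a ha h => ?_⟩
  exact hx (.inr (mem_biUnion ha h))

section InitialSegments

variable {α : Type*} [LinearOrder α]

lemma irred_range_Iio_diff_empty : Irred (range (Iio : α → Set α) \ {∅}) := by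
  rintro _ ⟨⟨α₀, rfl⟩, hne⟩ hgen
  obtain ⟨z, hz⟩ := nonempty_iff_ne_empty.2 hne
  have hconst : ∀ X : Set α, InGen ((range Iio \ {∅}) \ {Iio α₀}) X →
      ∃ β < α₀, ∀ x, β ≤ x → x < α₀ → (x ∈ X ↔ α₀ ∈ X) := by
    intro X hX
    induction hX with
    | @base c hc =>
      obtain ⟨⟨⟨γ, rfl⟩, _⟩, hγ⟩ := hc
      rcases lt_or_gt_of_ne (fun h : γ = α₀ => hγ (h ▸ rfl)) with h | h
      · exact ⟨γ, h, fun x hx _ => by simp [not_lt.2 hx, not_lt.2 h.le]⟩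
      · exact ⟨z, hz, fun x _ hx => by simp [hx.trans h, h]⟩
    | bot => exact ⟨z, hz, fun _ _ _ => Iff.rfl⟩
    | @compl c _ ih =>
      obtain ⟨β, hβ, hc⟩ := ih
      exact ⟨β, hβ, fun x h₁ h₂ => not_congr (hc x h₁ h₂)⟩
    | @sup c d _ _ ih₁ ih₂ =>
      obtain ⟨β₁, hβ₁, h₁⟩ := ih₁
      obtain ⟨β₂, hβ₂, h₂⟩ := ih₂
      exact ⟨max β₁ β₂, max_lt hβ₁ hβ₂, fun x hx hxα => or_congr
        (h₁ x (le_of_max_le_left hx) hxα) (h₂ x (le_of_max_le_right hx) hxα)⟩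
  obtain ⟨β, hβ, h⟩ := hconst _ hgen
  exact lt_irrefl α₀ ((h β le_rfl hβ).1 hβ)

lemma Iio_eq_inter_Iic {c : Set α} {m : α} (hm : m ∉ c) (hlow : Iio m ⊆ c) :
    Iio m = c ∩ Iic m :=
  Subset.antisymm (fun _ hx => ⟨hlow hx, le_of_lt hx⟩)
    fun _ ⟨hxc, hxm⟩ => lt_of_le_of_ne hxm fun h => hm (h ▸ hxc)

variable [WellFoundedLT α]

/-- `m` is the least point at which membership in `b` changes. -/
lemma exists_Iio_eq_inter_Iic {b : Set α} (hb : b.Nonempty) (hbc : bᶜ.Nonempty) :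
    ∃ m, (Iio m).Nonempty ∧ (Iio m = b ∩ Iic m ∨ Iio m = bᶜ ∩ Iic m) := by
  obtain ⟨m₁, hm₁, hmin₁⟩ := wellFounded_lt.has_min b hb
  obtain ⟨m₂, hm₂, hmin₂⟩ := wellFounded_lt.has_min bᶜ hbc
  rcases lt_or_gt_of_ne (fun h : m₁ = m₂ => hm₂ (h ▸ hm₁)) with h | h
  · refine ⟨m₂, ⟨m₁, h⟩, .inl (Iio_eq_inter_Iic hm₂ fun x hx => ?_)⟩
    exact not_not.1 fun hxb => hmin₂ x hxb hx
  · refine ⟨m₁, ⟨m₂, h⟩, .inr (Iio_eq_inter_Iic (not_not.2 hm₁) fun x hx hxb => ?_)⟩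
    exact hmin₁ x hxb hx

lemma not_irred_insert_range_Iio_diff_empty [NoMaxOrder α] {b : Set α}
    (hb : b ∉ range (Iio : α → Set α) \ {∅}) : ¬ Irred (insert b (range Iio \ {∅})) := by
  let _ := SuccOrder.ofLinearWellFoundedLT α
  intro hirr
  obtain rfl | hbne := eq_empty_or_nonempty b
  · exact hirr ∅ (mem_insert _ _) .bot
  by_cases hbu : b = Set.univ
  · exact hirr b (mem_insert _ _) (hbu ▸ InGen.top _)
  have hbcne : bᶜ.Nonempty := nonempty_compl.2 hbu
  obtain ⟨m, hm, hmb⟩ := exists_Iio_eq_inter_Iic hbne hbcne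
  have hIio : Iio m ∈ range (Iio : α → Set α) \ {∅} := ⟨⟨m, rfl⟩, hm.ne_empty⟩
  set G := insert b (range Iio \ {∅}) \ {Iio m}
  have hbG : InGen G b := .base ⟨mem_insert _ _, fun h => hb (eq_of_mem_singleton h ▸ hIio)⟩
  have hIicG : InGen G (Iic m) := by
    refine .base ⟨mem_insert_of_mem _ ⟨⟨Order.succ m, Order.Iio_succ m⟩, ?_⟩, fun h => ?_⟩
    · exact (nonempty_Iic).ne_empty
    · have hm : m ∈ Iic m := self_mem_Iic
      rw [eq_of_mem_singleton h] at hm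
      exact lt_irrefl m hm
  have hIioG : InGen G (Iio m) := by
    rcases hmb with h | h <;> rw [h]
    exacts [hbG.inf hIicG, hbG.compl.inf hIicG]
  exact hirr (Iio m) (mem_insert_of_mem _ hIio) hIioG

end InitialSegments

instance : WellFoundedLT W := inferInstanceAs (WellFoundedLT (Cardinal.aleph 1).ord.ToType)

instance : NoMaxOrder W := Cardinal.noMaxOrder (Cardinal.aleph0_le_aleph 1)

lemma mk_W : #W = ℵ₁ := Cardinal.mk_ord_toType _

instance : Uncountable W :=
  Cardinal.aleph0_lt_mk_iff.1 (mk_W ▸ Cardinal.aleph0_lt_aleph_one)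

lemma sInf_eq_of_le_of_mem {γ : Type*} [ConditionallyCompleteLinearOrderBot γ] {s : Set γ}
    {κ c : γ} (hc : c ∈ s) (hcκ : c ≤ κ) (hle : ∀ d ∈ s, κ ≤ d) : sInf s = κ :=
  le_antisymm ((csInf_le' hc).trans hcκ) (le_csInf ⟨c, hc⟩ hle)

lemma piIn_eq_aleph_one {Bs : Set (Set W)} (hsingle : ∀ x, {x} ∈ Bs) : piIn Bs = ℵ₁ := by
  have hsingleS : ∀ {S : Set (Set W)}, (∀ b ∈ Bs, b ≠ ∅ → ∃ d ∈ S, d ≠ ∅ ∧ d ⊆ b) →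
      range singleton ⊆ S := by
    rintro S hS _ ⟨x, rfl⟩
    obtain ⟨d, hdS, hd, hdx⟩ := hS {x} (hsingle x) (singleton_ne_empty x)
    rwa [← (subset_singleton_iff_eq.1 hdx).resolve_left hd]
  have hmk : #(range (singleton : W → Set W)) = ℵ₁ := by
    rw [Cardinal.mk_range_eq _ singleton_injective, mk_W]
  refine sInf_eq_of_le_of_mem ⟨range singleton, ?_, ?_, hmk⟩ le_rfl ?_
  · exact range_subset_iff.2 hsingle
  · intro b _ hb
    obtain ⟨x, hx⟩ := nonempty_iff_ne_empty.2 hb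
    exact ⟨{x}, mem_range_self x, singleton_ne_empty x, singleton_subset_iff.2 hx⟩
  · rintro _ ⟨S, -, hS, rfl⟩
    exact hmk ▸ Cardinal.mk_le_mk_of_subset (hsingleS hS)

lemma MaxIrredIn.aleph_one_le_mk {Bs E : Set (Set W)} (hsingle : ∀ x, {x} ∈ Bs)
    (h : MaxIrredIn Bs E) : ℵ₁ ≤ #E := by
  refine not_lt.1 fun hlt => ?_
  have hEc : E.Countable :=
    Cardinal.le_aleph0_iff_set_countable.1 (Cardinal.lt_aleph_one_iff.1 hlt)
  obtain ⟨x, hxE, hirr⟩ := h.2.1.exists_insert_singleton hEc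
  exact h.2.2 {x} (hsingle x) hxE hirr

theorem pi_irrMM_of_initialSegments_general (Bs : Set (Set W))
    (hA : finCofin ⊆ Bs)
    (hinit : ∀ α : W, Set.Iio α ∈ Bs) :
    piIn Bs = Cardinal.aleph 1 ∧ irrMMIn Bs = Cardinal.aleph 1 := by
  have hsingle : ∀ x : W, {x} ∈ Bs := fun x => hA (.inl (finite_singleton x))
  have hE₀ : MaxIrredIn Bs (range (Iio : W → Set W) \ {∅}) :=
    ⟨fun _ ⟨⟨α, hα⟩, _⟩ => hα ▸ hinit α, irred_range_Iio_diff_empty,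
      fun _ _ hb => not_irred_insert_range_Iio_diff_empty hb⟩
  refine ⟨piIn_eq_aleph_one hsingle, sInf_eq_of_le_of_mem ⟨_, hE₀, rfl⟩ ?_ ?_⟩
  · exact (Cardinal.mk_le_mk_of_subset sdiff_subset).trans (Cardinal.mk_range_le.trans mk_W.le)
  · rintro _ ⟨E, hE, rfl⟩
    exact hE.aleph_one_le_mk hsingle

theorem pi_irrMM_of_initialSegments (Bs : Set (Set W))
    (hsub : IsSubalg Bs) (hA : finCofin ⊆ Bs)
    (hinit : ∀ α : W, Set.Iio α ∈ Bs) :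
    piIn Bs = Cardinal.aleph 1 ∧ irrMMIn Bs = Cardinal.aleph 1 :=
  pi_irrMM_of_initialSegments_general Bs hA hinit
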